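/- 𝔟 ≤ 𝔰(ℝ): the bounding number is at most the splitting number of the reals. Equivalently, for every family 𝒰 of open subsets of the Cantor space 2^ω with |𝒰| < 𝔟 there is an infinite X ⊆ 2^ω that is not split by any member of 𝒰. -/

import Mathlib

/-!
Each open `U ⊆ 2^ω` has a modulus `f_U`: `f_U m` is a cylinder length that works uniformly for
the finitely many points of `U` vanishing from `m` on. Fewer than `𝔟` moduli are dominated by one
`g`. Choose positions `p₀ < p₁ < ⋯` with `g (p_k + 1) < p_{k+1}`, let `x` be the characteristic
function of `{p_k | k}` and `b_k` that of `{p_0, …, p_k}`. Then `b_k → x`, so if `x ∈ U` almost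
all `b_k` lie in `U`; and if `b_k ∈ U` for a large `k`, then `x`, which agrees with `b_k` below
`p_{k+1} > f_U (p_k + 1)`, lies in `U` too. Hence no `U` splits `{b_k | k}`.

For `ℝ`, pull a splitting family back along a continuous injection `2^ω → ℝ`; the infimum defining
`𝔰(ℝ)` is over a nonempty set because every infinite subset of a linear order contains a monotone
sequence, which an open set splits.
-/

open Cardinal Filter

/-- An open set `U` *splits* `A` if both `A ∩ U` and `A \ U` are infinite. -/
def Splits {X : Type*} (U A : Set X) : Prop := (A ∩ U).Infinite ∧ (A \ U).Infinite

/-- The splitting number of a topological space: the smallest cardinality of a family of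
open sets splitting every infinite subset. -/
noncomputable def splittingNumber (X : Type*) [TopologicalSpace X] : Cardinal :=
  sInf {c : Cardinal | ∃ 𝒰 : Set (Set X), (∀ U ∈ 𝒰, IsOpen U) ∧
    (∀ A : Set X, A.Infinite → ∃ U ∈ 𝒰, Splits U A) ∧ c = #𝒰}

/-- `f <* g`: eventual domination. -/
def EvDomLT (f g : ℕ → ℕ) : Prop := ∀ᶠ n in Filter.atTop, f n < g n

/-- The bounding number `𝔟`: the smallest cardinality of a family of functions `ℕ → ℕ`
not eventually dominated by any single function. -/
noncomputable def boundingNumber : Cardinal :=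
  sInf {c : Cardinal | ∃ B : Set (ℕ → ℕ),
    (¬ ∃ g : ℕ → ℕ, ∀ f ∈ B, EvDomLT f g) ∧ c = #B}

open Set Function PiNat Topology

theorem Splits.preimage_of_image {X Y : Type*} {f : X → Y} {U : Set Y} {A : Set X}
    (h : Splits U (f '' A)) : Splits (f ⁻¹' U) A := by
  obtain ⟨hin, hout⟩ := h
  rw [← image_inter_preimage] at hin
  rw [← image_sdiff_preimage] at hout
  exact ⟨hin.of_image, hout.of_image⟩

theorem not_splits_range_of_eventually {X : Type*} {b : ℕ → X} {U : Set X}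
    (h : (∀ᶠ k in atTop, b k ∈ U) ∨ ∀ᶠ k in atTop, b k ∉ U) : ¬ Splits U (range b) := by
  rw [← Nat.cofinite_eq_atTop, eventually_cofinite, eventually_cofinite] at h
  rintro ⟨hin, hout⟩
  rcases h with h | h
  · exact hout ((h.image b).subset <| by rintro _ ⟨⟨k, rfl⟩, hk⟩; exact ⟨k, hk, rfl⟩)
  · refine hin ((h.image b).subset ?_)
    rintro _ ⟨⟨k, rfl⟩, hk⟩
    exact ⟨k, not_not.2 hk, rfl⟩

theorem exists_evDomLT_of_mk_lt_boundingNumber {B : Set (ℕ → ℕ)} (hB : #B < boundingNumber) :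
    ∃ g : ℕ → ℕ, ∀ f ∈ B, EvDomLT f g := by
  by_contra h
  exact hB.not_ge (csInf_le' ⟨B, h, rfl⟩)

section Cylinder

variable {E : ℕ → Type*} [∀ n, TopologicalSpace (E n)] [∀ n, DiscreteTopology (E n)]

theorem IsOpen.exists_cylinder_subset {U : Set (∀ n, E n)} (hU : IsOpen U) {y : ∀ n, E n}
    (hy : y ∈ U) : ∃ n, cylinder y n ⊆ U := by
  obtain ⟨_, ⟨z, n, rfl⟩, hyz, hzU⟩ :=
    (isTopologicalBasis_cylinders E).exists_subset_of_mem_open hy hU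
  exact ⟨n, (mem_cylinder_iff_eq.1 hyz).le.trans hzU⟩

theorem Set.Finite.exists_forall_cylinder_subset {F U : Set (∀ n, E n)} (hF : F.Finite)
    (hU : IsOpen U) (hFU : F ⊆ U) : ∃ n, ∀ y ∈ F, cylinder y n ⊆ U := by
  choose! n hn using fun y (hy : y ∈ F) => hU.exists_cylinder_subset (hFU hy)
  obtain ⟨N, hN⟩ := (hF.image n).bddAbove
  exact ⟨N, fun y hy => (cylinder_anti y (hN (mem_image_of_mem n hy))).trans (hn y hy)⟩

end Cylinder

theorem finite_setOf_eq_false_of_le (m : ℕ) :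
    {y : ℕ → Bool | ∀ i, m ≤ i → y i = false}.Finite := by
  refine Finite.of_finite_image (f := fun y (i : Fin m) => y i) (toFinite _) ?_
  intro y hy z hz hyz
  funext i
  by_cases hi : i < m
  · exact congrFun hyz ⟨i, hi⟩
  · rw [hy i (not_lt.1 hi), hz i (not_lt.1 hi)]

theorem IsOpen.exists_forall_cylinder_subset {U : Set (ℕ → Bool)} (hU : IsOpen U) (m : ℕ) :
    ∃ n, ∀ y ∈ U, (∀ i, m ≤ i → y i = false) → cylinder y n ⊆ U := by
  obtain ⟨n, hn⟩ := ((finite_setOf_eq_false_of_le m).inter_of_right U).exists_forall_cylinder_subset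
    hU inter_subset_left
  exact ⟨n, fun y hyU hy => hn y ⟨hyU, hy⟩⟩

def jumpSeq (g : ℕ → ℕ) : ℕ → ℕ
  | 0 => 0
  | k + 1 => max (jumpSeq g k) (g (jumpSeq g k + 1)) + 1

theorem jumpSeq_strictMono (g : ℕ → ℕ) : StrictMono (jumpSeq g) :=
  strictMono_nat_of_lt_succ fun _ => Nat.lt_succ_of_le (le_max_left _ _)

theorem lt_jumpSeq_succ (g : ℕ → ℕ) (k : ℕ) : g (jumpSeq g k + 1) < jumpSeq g (k + 1) :=
  Nat.lt_succ_of_le (le_max_right _ _)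

section JumpPoint

open Classical in
noncomputable def rangeIndicator (p : ℕ → ℕ) : ℕ → Bool := fun i => decide (i ∈ range p)

open Classical in
noncomputable def jumpPoint (p : ℕ → ℕ) (k : ℕ) : ℕ → Bool :=
  fun i => decide (i ∈ range p ∧ i ≤ p k)

variable {p : ℕ → ℕ}

theorem jumpPoint_apply_of_lt {k i : ℕ} (hi : p k < i) : jumpPoint p k i = false := by
  simp [jumpPoint, hi]

theorem jumpPoint_injective (hp : StrictMono p) : Injective (jumpPoint p) := by
  refine Injective.of_lt_imp_ne fun j k hjk heq => ?_
  have : jumpPoint p k (p k) = true := by simp [jumpPoint]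
  rw [← heq, jumpPoint_apply_of_lt (hp hjk)] at this
  exact Bool.false_ne_true this

theorem rangeIndicator_mem_cylinder_jumpPoint (hp : StrictMono p) (k : ℕ) :
    rangeIndicator p ∈ cylinder (jumpPoint p k) (p (k + 1)) := by
  intro i hi
  simp only [rangeIndicator, jumpPoint, decide_eq_decide]
  refine ⟨fun hr => ⟨hr, ?_⟩, And.left⟩
  obtain ⟨j, rfl⟩ := hr
  exact hp.monotone (Nat.lt_succ_iff.1 (hp.lt_iff_lt.1 hi))

theorem tendsto_jumpPoint (hp : StrictMono p) :
    Tendsto (jumpPoint p) atTop (𝓝 (rangeIndicator p)) := by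
  refine tendsto_pi_nhds.2 fun i => tendsto_const_nhds.congr' ?_
  filter_upwards [eventually_ge_atTop i] with k hk
  simp [jumpPoint, rangeIndicator, hk.trans hp.le_apply]

end JumpPoint

theorem exists_infinite_forall_not_splits {𝒰 : Set (Set (ℕ → Bool))} (hop : ∀ U ∈ 𝒰, IsOpen U)
    (hcard : #𝒰 < boundingNumber) :
    ∃ A : Set (ℕ → Bool), A.Infinite ∧ ∀ U ∈ 𝒰, ¬ Splits U A := by
  choose! F hF using fun U (hU : U ∈ 𝒰) => (hop U hU).exists_forall_cylinder_subset
  obtain ⟨g, hg⟩ := exists_evDomLT_of_mk_lt_boundingNumber (mk_image_le.trans_lt hcard)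
  set p := jumpSeq g
  have hp : StrictMono p := jumpSeq_strictMono g
  refine ⟨range (jumpPoint p), infinite_range_of_injective (jumpPoint_injective hp),
    fun U hU => not_splits_range_of_eventually ?_⟩
  by_cases hx : rangeIndicator p ∈ U
  · exact .inl ((tendsto_jumpPoint hp).eventually ((hop U hU).mem_nhds hx))
  right
  have hFg : ∀ᶠ k in atTop, F U (p k + 1) < g (p k + 1) :=
    ((tendsto_add_atTop_nat 1).comp hp.tendsto_atTop).eventually (hg _ ⟨U, hU, rfl⟩)
  filter_upwards [hFg] with k hk hkU
  refine hx (hF U hU _ _ hkU (fun i hi => jumpPoint_apply_of_lt hi) ?_)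
  exact cylinder_anti _ (hk.trans (lt_jumpSeq_succ g k)).le
    (rangeIndicator_mem_cylinder_jumpPoint hp k)

theorem exists_isOpen_splits_of_strictMono {X : Type*} [LinearOrder X] [TopologicalSpace X]
    [OrderTopology X] {A : Set X} {c : ℕ → X} (hc : StrictMono c) (hA : ∀ n, c n ∈ A) :
    ∃ U, IsOpen U ∧ Splits U A := by
  refine ⟨⋃ k, Ioo (c (2 * k)) (c (2 * k + 2)), isOpen_iUnion fun _ => isOpen_Ioo, ?_, ?_⟩
  · refine infinite_of_injective_forall_mem (f := fun k => c (2 * k + 1))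
      (fun j k h => by have := hc.injective h; omega) fun k => ⟨hA _, ?_⟩
    exact mem_iUnion.2 ⟨k, hc (by omega), hc (by omega)⟩
  · refine infinite_of_injective_forall_mem (f := fun k => c (2 * k))
      (fun j k h => by have := hc.injective h; omega) fun k => ⟨hA _, ?_⟩
    intro hk
    obtain ⟨j, hj₁, hj₂⟩ := mem_iUnion.1 hk
    rw [hc.lt_iff_lt] at hj₁ hj₂
    omega

theorem Set.Infinite.exists_isOpen_splits {X : Type*} [LinearOrder X] [TopologicalSpace X]
    [OrderTopology X] {A : Set X} (hA : A.Infinite) : ∃ U, IsOpen U ∧ Splits U A := by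
  set a : ℕ → X := fun n => hA.natEmbedding A n
  have ha : Injective a := Subtype.val_injective.comp (hA.natEmbedding A).injective
  obtain ⟨φ, hφ | hφ⟩ := exists_increasing_or_nonincreasing_subseq (· < ·) a
  · exact exists_isOpen_splits_of_strictMono (c := a ∘ φ) hφ fun n => (hA.natEmbedding A _).2
  · have hanti : StrictAnti (a ∘ φ) := fun m n hmn =>
      (not_lt.1 (hφ m n hmn)).lt_of_ne ((ha.comp φ.injective).ne hmn.ne')
    exact exists_isOpen_splits_of_strictMono (X := Xᵒᵈ) (c := OrderDual.toDual ∘ a ∘ φ)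
      hanti fun n => (hA.natEmbedding A _).2

theorem boundingNumber_le_splittingNumber {X : Type} [TopologicalSpace X]
    (hX : ∀ A : Set X, A.Infinite → ∃ U, IsOpen U ∧ Splits U A) {e : (ℕ → Bool) → X}
    (he : Continuous e) (he' : Injective e) : boundingNumber ≤ splittingNumber X := by
  refine le_csInf ⟨_, {U | IsOpen U}, fun U hU => hU, fun A hA => ?_, rfl⟩ ?_
  · obtain ⟨U, hU, hs⟩ := hX A hA
    exact ⟨U, hU, hs⟩
  rintro _ ⟨𝒰, hop, hsplit, rfl⟩
  by_contra! hlt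
  obtain ⟨A, hA, hnot⟩ := exists_infinite_forall_not_splits (𝒰 := (e ⁻¹' ·) '' 𝒰)
    (by rintro _ ⟨U, hU, rfl⟩; exact (hop U hU).preimage he) (mk_image_le.trans_lt hlt)
  obtain ⟨U, hU, hs⟩ := hsplit (e '' A) (hA.image he'.injOn)
  exact hnot _ ⟨U, hU, rfl⟩ hs.preimage_of_image

/-- `𝔟 ≤ 𝔰(ℝ)`; equivalently, any family of fewer than `𝔟` open subsets of the Cantor
space fails to split some infinite set. -/
theorem stmt11 :
    boundingNumber ≤ splittingNumber ℝ ∧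
    ∀ 𝒰 : Set (Set (ℕ → Bool)), (∀ U ∈ 𝒰, IsOpen U) → #𝒰 < boundingNumber →
      ∃ A : Set (ℕ → Bool), A.Infinite ∧ ∀ U ∈ 𝒰, ¬ Splits U A := by
  obtain ⟨e, -, he, he'⟩ :=
    (PerfectSpace.univ_perfect (α := ℝ)).exists_nat_bool_injection univ_nonempty
  exact ⟨boundingNumber_le_splittingNumber (fun _ hA => hA.exists_isOpen_splits) he he',
    fun _ => exists_infinite_forall_not_splits⟩
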